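/- Let W: X→Y and V: X→Z be two discrete memoryless channels with common finite input alphabet such that W is less noisy than V. Fix an input distribution on X, let X_1,…,X_N (N = 2^k) be i.i.d. copies of X, and let Y_i (respectively Z_i) be the output of channel W (respectively V) applied independently to X_i for each i. Let G_k be the k-th Kronecker power over GF(2) of [[1,0],[1,1]] and define U_1^N = X_1^N · G_k over GF(2). Then for every ε ∈ (0,1), 𝒟_ε^N(X|Z) ⊆ 𝒟_ε^N(X|Y), where 𝒟_ε^N(X|Y) = {i : H(U_i | U_1^{i−1}, Y_1^N) ≤ ε} and 𝒟_ε^N(X|Z) = {i : H(U_i | U_1^{i−1}, Z_1^N) ≤ ε}. -/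

import Mathlib

open scoped BigOperators
open Finset

namespace JWOM

/-- `p` is a probability mass function on the finite type `Ω`. -/
def IsPMF {Ω : Type*} [Fintype Ω] (p : Ω → ℝ) : Prop :=
  (∀ ω, 0 ≤ p ω) ∧ ∑ ω, p ω = 1

/-- Marginal pmf of the random variable `X` under the pmf `p`. -/
noncomputable def margin {Ω α : Type*} [Fintype Ω] [Fintype α] [DecidableEq α]
    (p : Ω → ℝ) (X : Ω → α) : α → ℝ :=
  fun a => ∑ ω, if X ω = a then p ω else 0

/-- Shannon entropy (base 2) of the random variable `X` under the pmf `p`. -/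
noncomputable def ent {Ω α : Type*} [Fintype Ω] [Fintype α] [DecidableEq α]
    (p : Ω → ℝ) (X : Ω → α) : ℝ :=
  ∑ a, -(margin p X a * Real.logb 2 (margin p X a))

/-- Conditional Shannon entropy `H(X|Y)` (base 2). -/
noncomputable def condEnt {Ω α β : Type*} [Fintype Ω] [Fintype α] [DecidableEq α]
    [Fintype β] [DecidableEq β] (p : Ω → ℝ) (X : Ω → α) (Y : Ω → β) : ℝ :=
  ent p (fun ω => (X ω, Y ω)) - ent p Y

/-- Mutual information `I(X;Y)` (base 2). -/
noncomputable def mutInfo {Ω α β : Type*} [Fintype Ω] [Fintype α] [DecidableEq α]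
    [Fintype β] [DecidableEq β] (p : Ω → ℝ) (X : Ω → α) (Y : Ω → β) : ℝ :=
  ent p X + ent p Y - ent p (fun ω => (X ω, Y ω))

/-- Conditional mutual information `I(X;Y|Z)` (base 2). -/
noncomputable def condMutInfo {Ω α β γ : Type*} [Fintype Ω] [Fintype α] [DecidableEq α]
    [Fintype β] [DecidableEq β] [Fintype γ] [DecidableEq γ]
    (p : Ω → ℝ) (X : Ω → α) (Y : Ω → β) (Z : Ω → γ) : ℝ :=
  condEnt p X Z - condEnt p X (fun ω => (Y ω, Z ω))

/-- The Markov chain `Z → X → T`: `Z` and `T` are conditionally independent given `X`. -/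
def Markov {Ω ζ 𝒳 τ : Type*} [Fintype Ω] [Fintype ζ] [DecidableEq ζ]
    [Fintype 𝒳] [DecidableEq 𝒳] [Fintype τ] [DecidableEq τ]
    (p : Ω → ℝ) (Z : Ω → ζ) (X : Ω → 𝒳) (T : Ω → τ) : Prop :=
  ∀ z x t, margin p (fun ω => (Z ω, X ω, T ω)) (z, x, t) * margin p X x =
    margin p (fun ω => (Z ω, X ω)) (z, x) * margin p (fun ω => (X ω, T ω)) (x, t)
open Matrix Kronecker

/-- The `k`-th Kronecker power over GF(2) of the polar kernel `[[1,0],[1,1]]`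
(indices reindexed to `Fin (2^k)`). -/
noncomputable def Gmat : (k : ℕ) → Matrix (Fin (2 ^ k)) (Fin (2 ^ k)) (ZMod 2)
  | 0 => 1
  | k + 1 =>
      Matrix.reindex (finProdFinEquiv.trans (finCongr (by ring)))
        (finProdFinEquiv.trans (finCongr (by ring)))
        ((!![1, 0; 1, 1] : Matrix (Fin 2) (Fin 2) (ZMod 2)) ⊗ₖ Gmat k)

/-!
Since `U_1^N` is a function of the inputs `X_1^N`, it suffices to show
`H(T | S, Y_1^N) ≤ H(T | S, Z_1^N)` for arbitrary functions `T`, `S` of the inputs. Replace the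
outputs of `V` by those of `W` one coordinate `j` at a time. Write `S'` for `S` together with the
observations at the other coordinates; then `(T, S') → X_j → (Y_j, Z_j)` with `Y_j`, `Z_j`
produced by `W` and `V`, so for each value of `S'` the less-noisy hypothesis applied to the
conditional law of `(T, X_j)` gives `I(T; Y_j | S' = s) ≥ I(T; Z_j | S' = s)`, that is
`H(T | S' = s, Y_j) ≤ H(T | S' = s, Z_j)`. Averaging over `s` by the chain rule shows that each
replacement can only decrease the conditional entropy.
-/

section Entropy

variable {Ω α β γ : Type*} [Fintype Ω] [Fintype α] [DecidableEq α] [Fintype β] [DecidableEq β]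
  [Fintype γ] [DecidableEq γ]

lemma neg_mul_logb_mul (a b : ℝ) :
    -(a * b * Real.logb 2 (a * b)) = b * -(a * Real.logb 2 a) + a * -(b * Real.logb 2 b) := by
  rcases eq_or_ne a 0 with rfl | ha
  · simp
  rcases eq_or_ne b 0 with rfl | hb
  · simp
  rw [Real.logb_mul ha hb]
  ring

lemma margin_nonneg {p : Ω → ℝ} (hp : ∀ ω, 0 ≤ p ω) (X : Ω → α) (a : α) :
    0 ≤ margin p X a :=
  Finset.sum_nonneg fun ω _ => by split_ifs <;> simp [hp ω]

lemma sum_margin (p : Ω → ℝ) (X : Ω → α) : ∑ a, margin p X a = ∑ ω, p ω := by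
  unfold margin
  rw [Finset.sum_comm]
  simp

lemma sum_margin_prod (p : Ω → ℝ) (X : Ω → α) (Y : Ω → β) (a : α) :
    ∑ b, margin p (fun ω => (X ω, Y ω)) (a, b) = margin p X a := by
  unfold margin
  rw [Finset.sum_comm]
  refine Finset.sum_congr rfl fun ω _ => ?_
  by_cases h : X ω = a <;> simp [h]

lemma margin_prod_assoc (p : Ω → ℝ) (X : Ω → α) (Y : Ω → β) (Z : Ω → γ) (a : α) (b : β)
    (c : γ) :
    margin p (fun ω => (X ω, Y ω, Z ω)) (a, b, c) =
      margin p (fun ω => ((X ω, Y ω), Z ω)) ((a, b), c) := by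
  simp only [margin, Prod.mk.injEq, and_assoc]

lemma margin_comp (p : Ω → ℝ) (F : Ω → α) (X : α → β) :
    margin (margin p F) X = margin p (fun ω => X (F ω)) := by
  funext b
  unfold margin
  rw [← Finset.sum_fiberwise Finset.univ F]
  refine Finset.sum_congr rfl fun a _ => ?_
  split_ifs with h
  · rw [Finset.sum_filter]
    exact Finset.sum_congr rfl fun ω _ => by split_ifs <;> simp_all
  · exact (Finset.sum_eq_zero fun ω hω => by simp_all).symm

lemma ent_comp (p : Ω → ℝ) (F : Ω → α) (X : α → β) :
    ent p (fun ω => X (F ω)) = ent (margin p F) X := by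
  rw [ent, ent, margin_comp]

lemma mutInfo_comp (p : Ω → ℝ) (F : Ω → α) (X : α → β) (Y : α → γ) :
    mutInfo p (fun ω => X (F ω)) (fun ω => Y (F ω)) = mutInfo (margin p F) X Y := by
  rw [mutInfo, mutInfo, ent_comp p F X, ent_comp p F Y, ent_comp p F fun a => (X a, Y a)]

lemma margin_comp_injective_apply (p : Ω → ℝ) (X : Ω → α) {g : α → β}
    (hg : Function.Injective g) (a : α) :
    margin p (fun ω => g (X ω)) (g a) = margin p X a := by
  simp only [margin, hg.eq_iff]

lemma ent_comp_injective (p : Ω → ℝ) (X : Ω → α) {g : α → β} (hg : Function.Injective g) :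
    ent p (fun ω => g (X ω)) = ent p X := by
  refine (Fintype.sum_of_injective g hg _ _ (fun b hb => ?_) fun a => ?_).symm
  · have : margin p (fun ω => g (X ω)) b = 0 :=
      Finset.sum_eq_zero fun ω _ => if_neg fun h => hb ⟨X ω, h⟩
    simp [this]
  · rw [margin_comp_injective_apply p X hg]

lemma condEnt_comp_injective (p : Ω → ℝ) (X : Ω → α) (Y : Ω → β) {g : β → γ}
    (hg : Function.Injective g) :
    condEnt p X (fun ω => g (Y ω)) = condEnt p X Y := by
  have hg' : Function.Injective fun ab : α × β => (ab.1, g ab.2) :=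
    Function.injective_id.prodMap hg
  rw [condEnt, condEnt, ent_comp_injective p Y hg, ent_comp_injective p (fun ω => (X ω, Y ω)) hg']

lemma condEnt_eq_ent_sub_mutInfo (p : Ω → ℝ) (X : Ω → α) (Y : Ω → β) :
    condEnt p X Y = ent p X - mutInfo p X Y := by
  rw [condEnt, mutInfo]
  ring

end Entropy

section ChainRule

variable {Ω σ α β : Type*} [Fintype Ω] [Fintype σ] [DecidableEq σ] [Fintype α] [DecidableEq α]
  [Fintype β] [DecidableEq β]

noncomputable def condPmf (p : Ω → ℝ) (S : Ω → σ) (s : σ) : Ω → ℝ :=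
  fun ω => if S ω = s then p ω / margin p S s else 0

lemma condPmf_nonneg {p : Ω → ℝ} (hp : ∀ ω, 0 ≤ p ω) (S : Ω → σ) (s : σ) (ω : Ω) :
    0 ≤ condPmf p S s ω := by
  unfold condPmf
  split_ifs
  exacts [div_nonneg (hp ω) (margin_nonneg hp S s), le_rfl]

lemma isPMF_condPmf {p : Ω → ℝ} (hp : ∀ ω, 0 ≤ p ω) (S : Ω → σ) {s : σ}
    (hs : margin p S s ≠ 0) : IsPMF (condPmf p S s) := by
  refine ⟨condPmf_nonneg hp S s, ?_⟩
  have h : ∀ ω, condPmf p S s ω = (if S ω = s then p ω else 0) / margin p S s := fun ω => by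
    unfold condPmf
    split_ifs <;> simp
  rw [Fintype.sum_congr _ _ h, ← Finset.sum_div]
  exact div_self hs

lemma margin_prod_eq_zero_of_margin_eq_zero {p : Ω → ℝ} (hp : ∀ ω, 0 ≤ p ω) (S : Ω → σ) (A : Ω → α)
    {s : σ} (hs : margin p S s = 0) (a : α) : margin p (fun ω => (S ω, A ω)) (s, a) = 0 := by
  have hsum := sum_margin_prod p S A s
  rw [hs, Finset.sum_eq_zero_iff_of_nonneg fun a _ => margin_nonneg hp _ _] at hsum
  exact hsum a (Finset.mem_univ a)

lemma margin_prod_eq_mul_margin_condPmf {p : Ω → ℝ} (hp : ∀ ω, 0 ≤ p ω) (S : Ω → σ)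
    (A : Ω → α) (s : σ) (a : α) :
    margin p (fun ω => (S ω, A ω)) (s, a) = margin p S s * margin (condPmf p S s) A a := by
  rcases eq_or_ne (margin p S s) 0 with hs | hs
  · rw [hs, zero_mul, margin_prod_eq_zero_of_margin_eq_zero hp S A hs]
  refine (Finset.sum_congr rfl fun ω _ => ?_).trans (Finset.mul_sum _ _ _).symm
  by_cases hS : S ω = s <;> by_cases hA : A ω = a <;> simp [condPmf, hS, hA, mul_div_cancel₀ _ hs]

lemma ent_prod_eq_add_sum {p : Ω → ℝ} (hp : ∀ ω, 0 ≤ p ω) (S : Ω → σ) (A : Ω → α) :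
    ent p (fun ω => (S ω, A ω)) = ent p S + ∑ s, margin p S s * ent (condPmf p S s) A := by
  rw [ent, ent, Fintype.sum_prod_type, ← Finset.sum_add_distrib]
  refine Finset.sum_congr rfl fun s _ => ?_
  simp_rw [margin_prod_eq_mul_margin_condPmf hp S A s, neg_mul_logb_mul, Finset.sum_add_distrib,
    ← Finset.sum_mul, ← Finset.mul_sum]
  rw [ent]
  congr 1
  rcases eq_or_ne (margin p S s) 0 with hs | hs
  · simp [hs]
  · rw [sum_margin, (isPMF_condPmf hp S hs).2, one_mul]

lemma condEnt_prod_eq_sum {p : Ω → ℝ} (hp : ∀ ω, 0 ≤ p ω) (X : Ω → α) (S : Ω → σ) (Y : Ω → β) :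
    condEnt p X (fun ω => (S ω, Y ω)) = ∑ s, margin p S s * condEnt (condPmf p S s) X Y := by
  have hswap : ent p (fun ω => (X ω, S ω, Y ω)) = ent p (fun ω => (S ω, X ω, Y ω)) :=
    (ent_comp_injective p (fun ω => (S ω, X ω, Y ω))
      (g := fun w : σ × α × β => (w.2.1, w.1, w.2.2)) (fun w w' h => by
        simp only [Prod.mk.injEq] at h; ext <;> tauto))
  rw [condEnt, hswap, ent_prod_eq_add_sum hp, ent_prod_eq_add_sum hp]
  simp only [condEnt, mul_sub, Finset.sum_sub_distrib]
  ring

end ChainRule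

section Channels

/-- `O` is the output of the channel `K` on input `X`, conditionally independent of `R`
given `X`. -/
def IsChannelOutput {Ω ρ 𝒳 𝒪 : Type*} [Fintype Ω] [Fintype ρ] [DecidableEq ρ] [Fintype 𝒳]
    [DecidableEq 𝒳] [Fintype 𝒪] [DecidableEq 𝒪] (p : Ω → ℝ) (R : Ω → ρ) (X : Ω → 𝒳)
    (O : Ω → 𝒪) (K : 𝒳 → 𝒪 → ℝ) : Prop :=
  ∀ r x o, margin p (fun ω => (R ω, X ω, O ω)) (r, x, o) =
    margin p (fun ω => (R ω, X ω)) (r, x) * K x o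

lemma IsChannelOutput.condPmf {Ω σ τ 𝒳 𝒪 : Type*} [Fintype Ω] [Fintype σ] [DecidableEq σ]
    [Fintype τ] [DecidableEq τ] [Fintype 𝒳] [DecidableEq 𝒳] [Fintype 𝒪] [DecidableEq 𝒪]
    {p : Ω → ℝ} (hp : ∀ ω, 0 ≤ p ω) {S : Ω → σ} {T : Ω → τ} {X : Ω → 𝒳} {O : Ω → 𝒪}
    {K : 𝒳 → 𝒪 → ℝ} (h : IsChannelOutput p (fun ω => (S ω, T ω)) X O K) {s : σ}
    (hs : margin p S s ≠ 0) : IsChannelOutput (condPmf p S s) T X O K := by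
  intro t x o
  have hTXO := margin_prod_eq_mul_margin_condPmf hp S (fun ω => (T ω, X ω, O ω)) s (t, x, o)
  have hTX := margin_prod_eq_mul_margin_condPmf hp S (fun ω => (T ω, X ω)) s (t, x)
  rw [margin_prod_assoc, h] at hTXO
  rw [margin_prod_assoc] at hTX
  refine mul_left_cancel₀ hs ?_
  rw [← hTXO, hTX, mul_assoc]

variable {𝒳 𝒴 𝒵 : Type} [Fintype 𝒳] [DecidableEq 𝒳] [Fintype 𝒴] [DecidableEq 𝒴] [Fintype 𝒵]
  [DecidableEq 𝒵]

def LessNoisy (W : 𝒳 → 𝒴 → ℝ) (V : 𝒳 → 𝒵 → ℝ) : Prop :=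
  ∀ (ζ : Type) [Fintype ζ] [DecidableEq ζ] (r : ζ × 𝒳 → ℝ), IsPMF r →
    mutInfo (fun w : ζ × 𝒳 × 𝒴 × 𝒵 => r (w.1, w.2.1) * W w.2.1 w.2.2.1 * V w.2.1 w.2.2.2)
        (fun w => w.1) (fun w => w.2.2.1) ≥
      mutInfo (fun w : ζ × 𝒳 × 𝒴 × 𝒵 => r (w.1, w.2.1) * W w.2.1 w.2.2.1 * V w.2.1 w.2.2.2)
        (fun w => w.1) (fun w => w.2.2.2)

variable {W : 𝒳 → 𝒴 → ℝ} {V : 𝒳 → 𝒵 → ℝ} {Ω σ τ : Type} [Fintype Ω] [Fintype σ]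
  [DecidableEq σ] [Fintype τ] [DecidableEq τ]

lemma LessNoisy.condEnt_le (hLN : LessNoisy W V) {q : Ω → ℝ} (hq : IsPMF q) {T : Ω → τ}
    {X : Ω → 𝒳} {Y : Ω → 𝒴} {Z : Ω → 𝒵}
    (h : IsChannelOutput q T X (fun ω => (Y ω, Z ω)) fun x o => W x o.1 * V x o.2) :
    condEnt q T Y ≤ condEnt q T Z := by
  set r := margin q fun ω => (T ω, X ω)
  have hr : IsPMF r := ⟨margin_nonneg hq.1 _, by rw [sum_margin, hq.2]⟩
  have hmarg : margin q (fun ω => (T ω, X ω, Y ω, Z ω)) =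
      fun w => r (w.1, w.2.1) * W w.2.1 w.2.2.1 * V w.2.1 w.2.2.2 := by
    funext ⟨t, x, y, z⟩
    rw [mul_assoc]
    exact h t x (y, z)
  have hY := mutInfo_comp q (fun ω => (T ω, X ω, Y ω, Z ω)) (fun w => w.1) (fun w => w.2.2.1)
  have hZ := mutInfo_comp q (fun ω => (T ω, X ω, Y ω, Z ω)) (fun w => w.1) (fun w => w.2.2.2)
  rw [hmarg] at hY hZ
  rw [condEnt_eq_ent_sub_mutInfo, condEnt_eq_ent_sub_mutInfo]
  linarith [hLN τ r hr]

lemma LessNoisy.condEnt_prod_le (hLN : LessNoisy W V) {p : Ω → ℝ} (hp : ∀ ω, 0 ≤ p ω)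
    {S : Ω → σ} {T : Ω → τ} {X : Ω → 𝒳} {Y : Ω → 𝒴} {Z : Ω → 𝒵}
    (h : IsChannelOutput p (fun ω => (S ω, T ω)) X (fun ω => (Y ω, Z ω))
      fun x o => W x o.1 * V x o.2) :
    condEnt p T (fun ω => (S ω, Y ω)) ≤ condEnt p T (fun ω => (S ω, Z ω)) := by
  rw [condEnt_prod_eq_sum hp, condEnt_prod_eq_sum hp]
  refine Finset.sum_le_sum fun s _ => ?_
  rcases eq_or_ne (margin p S s) 0 with hs | hs
  · simp [hs]
  exact mul_le_mul_of_nonneg_left (hLN.condEnt_le (isPMF_condPmf hp S hs) (h.condPmf hp hs))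
    (margin_nonneg hp S s)

end Channels

section Memoryless

variable {ι : Type*} [Fintype ι]

def jointPmf {𝒳 𝒴 𝒵 : Type*} (pX : 𝒳 → ℝ) (W : 𝒳 → 𝒴 → ℝ) (V : 𝒳 → 𝒵 → ℝ) :
    (ι → 𝒳 × 𝒴 × 𝒵) → ℝ :=
  fun ω => ∏ i, pX (ω i).1 * W (ω i).1 (ω i).2.1 * V (ω i).1 (ω i).2.2

variable {𝒳 𝒴 𝒵 : Type*} {pX : 𝒳 → ℝ} {W : 𝒳 → 𝒴 → ℝ} {V : 𝒳 → 𝒵 → ℝ}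

lemma jointPmf_nonneg (hpX : ∀ x, 0 ≤ pX x) (hW : ∀ x y, 0 ≤ W x y) (hV : ∀ x z, 0 ≤ V x z)
    (ω : ι → 𝒳 × 𝒴 × 𝒵) : 0 ≤ jointPmf pX W V ω :=
  Finset.prod_nonneg fun _ _ => mul_nonneg (mul_nonneg (hpX _) (hW _ _)) (hV _ _)

variable [DecidableEq ι]

lemma prod_apply_update {α M : Type*} [CommMonoid M] (F : α → M) (ω : ι → α) (j : ι) (c : α) :
    ∏ i, F (Function.update ω j c i) = F c * ∏ i ∈ Finset.univ.erase j, F (ω i) := by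
  simp_rw [Function.apply_update (fun _ => F)]
  rw [Finset.prod_update_of_mem (Finset.mem_univ j), Finset.sdiff_singleton_eq_erase]

variable {A B ρ : Type*} [Fintype A] [DecidableEq A] [Fintype B] [DecidableEq B] [Fintype ρ]
  [DecidableEq ρ] (g : A → ℝ) (K : A → B → ℝ) {R : (ι → A × B) → ρ} {j : ι}

/-- Resampling the `j`-th output from `b` to `b'` is a bijection between the two fibres, and it
rescales the product weight by `K a b' / K a b`. -/
lemma margin_output_mul_kernel_comm
    (hR : ∀ ω b, R (Function.update ω j ((ω j).1, b)) = R ω) (r : ρ) (a : A) (b b' : B) :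
    margin (fun ω => ∏ i, g (ω i).1 * K (ω i).1 (ω i).2) (fun ω => (R ω, (ω j).1, (ω j).2))
        (r, a, b) * K a b' =
      margin (fun ω => ∏ i, g (ω i).1 * K (ω i).1 (ω i).2) (fun ω => (R ω, (ω j).1, (ω j).2))
        (r, a, b') * K a b := by
  have hfib : ∀ ω (c : A × B), (R ω, (ω j).1, (ω j).2) = (r, c) ↔ R ω = r ∧ ω j = c := by
    simp [Prod.ext_iff]
  have hRa : ∀ ω c, (ω j).1 = a → R (Function.update ω j (a, c)) = R ω := by
    rintro ω c rfl
    exact hR ω c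
  simp only [margin, Finset.sum_mul, ← Finset.sum_filter, hfib]
  refine Finset.sum_nbij' (fun ω => Function.update ω j (a, b'))
    (fun ω => Function.update ω j (a, b)) ?_ ?_ ?_ ?_ ?_ <;>
    simp only [Finset.mem_filter, Finset.mem_univ, true_and, and_imp]
  · rintro ω rfl hω
    exact ⟨hRa ω b' (by simp [hω]), by simp⟩
  · rintro ω rfl hω
    exact ⟨hRa ω b (by simp [hω]), by simp⟩
  · rintro ω - hω
    rw [Function.update_idem, ← hω, Function.update_eq_self]
  · rintro ω - hω
    rw [Function.update_idem, ← hω, Function.update_eq_self]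
  · rintro ω - hω
    rw [prod_apply_update (fun c : A × B => g c.1 * K c.1 c.2),
      ← Finset.mul_prod_erase _ _ (Finset.mem_univ j), hω]
    ring

lemma isChannelOutput_coord (hK : ∀ a, ∑ b, K a b = 1)
    (hR : ∀ ω b, R (Function.update ω j ((ω j).1, b)) = R ω) :
    IsChannelOutput (fun ω => ∏ i, g (ω i).1 * K (ω i).1 (ω i).2) R (fun ω => (ω j).1)
      (fun ω => (ω j).2) K := by
  intro r a b
  rw [← mul_one (margin _ _ (r, a, b)), ← hK a, Finset.mul_sum,
    ← sum_margin_prod (X := fun ω => (R ω, (ω j).1)) _ (fun ω => (ω j).2), Finset.sum_mul]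
  refine Finset.sum_congr rfl fun b' _ => ?_
  rw [margin_output_mul_kernel_comm g K hR, margin_prod_assoc]

variable [Fintype 𝒳] [DecidableEq 𝒳] [Fintype 𝒴] [DecidableEq 𝒴] [Fintype 𝒵] [DecidableEq 𝒵]

lemma isChannelOutput_jointPmf (hW : ∀ x, ∑ y, W x y = 1) (hV : ∀ x, ∑ z, V x z = 1)
    {R : (ι → 𝒳 × 𝒴 × 𝒵) → ρ} {j : ι} (hR : ∀ ω b, R (Function.update ω j ((ω j).1, b)) = R ω) :
    IsChannelOutput (jointPmf pX W V) R (fun ω => (ω j).1)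
      (fun ω => ((ω j).2.1, (ω j).2.2)) fun x o => W x o.1 * V x o.2 := by
  have hK : ∀ x, ∑ o : 𝒴 × 𝒵, W x o.1 * V x o.2 = 1 := fun x => by
    simp only [Fintype.sum_prod_type, ← Finset.mul_sum, hV, mul_one, hW]
  have hp : jointPmf pX W V = fun ω : ι → 𝒳 × 𝒴 × 𝒵 =>
      ∏ i, pX (ω i).1 * (W (ω i).1 (ω i).2.1 * V (ω i).1 (ω i).2.2) := by
    funext ω
    simp only [jointPmf, mul_assoc]
  rw [hp]
  exact isChannelOutput_coord pX (fun x o => W x o.1 * V x o.2) hK hR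

end Memoryless

section Hybrid

variable {ι 𝒳 𝒴 𝒵 σ τ : Type} [DecidableEq ι]

def hybridObs (s : Finset ι) (ω : ι → 𝒳 × 𝒴 × 𝒵) : ι → 𝒴 ⊕ 𝒵 :=
  fun i => if i ∈ s then .inl (ω i).2.1 else .inr (ω i).2.2

variable [Fintype ι] [Fintype 𝒳] [DecidableEq 𝒳] [Fintype 𝒴] [DecidableEq 𝒴] [Fintype 𝒵]
  [DecidableEq 𝒵] [Fintype σ] [DecidableEq σ] [Fintype τ] [DecidableEq τ]
  {pX : 𝒳 → ℝ} {W : 𝒳 → 𝒴 → ℝ} {V : 𝒳 → 𝒵 → ℝ}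
  (hLN : LessNoisy W V) (hpX : ∀ x, 0 ≤ pX x) (hW0 : ∀ x y, 0 ≤ W x y)
  (hV0 : ∀ x z, 0 ≤ V x z) (hW1 : ∀ x, ∑ y, W x y = 1) (hV1 : ∀ x, ∑ z, V x z = 1)
  (f : (ι → 𝒳) → τ) (g : (ι → 𝒳) → σ)

include hLN hpX hW0 hV0 hW1 hV1

lemma condEnt_hybridObs_insert_le {s : Finset ι} {j : ι} (hj : j ∉ s) :
    condEnt (jointPmf pX W V) (fun ω => f fun i => (ω i).1)
        (fun ω => (g fun i => (ω i).1, hybridObs (insert j s) ω)) ≤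
      condEnt (jointPmf pX W V) (fun ω => f fun i => (ω i).1)
        (fun ω => (g fun i => (ω i).1, hybridObs s ω)) := by
  set e := Equiv.funSplitAt j (𝒴 ⊕ 𝒵)
  set S : (ι → 𝒳 × 𝒴 × 𝒵) → σ × ({i // i ≠ j} → 𝒴 ⊕ 𝒵) :=
    fun ω => (g fun i => (ω i).1, (e (hybridObs s ω)).2)
  have hinputs : ∀ (ω : ι → 𝒳 × 𝒴 × 𝒵) b,
      (fun i => (Function.update ω j ((ω j).1, b) i).1) = fun i => (ω i).1 := by
    intro ω b
    funext i
    by_cases h : i = j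
    · subst h
      simp
    · simp [h]
  have hS : ∀ ω b, S (Function.update ω j ((ω j).1, b)) = S ω := by
    intro ω b
    simp only [S, hinputs]
    congr 1
    funext i
    simp [e, hybridObs, Function.update_of_ne i.2]
  have key := hLN.condEnt_prod_le (jointPmf_nonneg hpX hW0 hV0)
    (isChannelOutput_jointPmf (R := fun ω => (S ω, f fun i => (ω i).1)) hW1 hV1
      fun ω b => Prod.ext (hS ω b) (congrArg f (hinputs ω b)))
  -- Both conditionings are injective images of `S` paired with the `j`-th output.
  have hG : ∀ {β : Type} (u : β → 𝒴 ⊕ 𝒵), Function.Injective u →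
      Function.Injective fun w : (σ × ({i // i ≠ j} → 𝒴 ⊕ 𝒵)) × β =>
        (w.1.1, e.symm (u w.2, w.1.2)) := by
    intro β u hu w w' h
    simp only [Prod.mk.injEq, EmbeddingLike.apply_eq_iff_eq] at h
    exact Prod.ext (Prod.ext h.1 h.2.2) (hu h.2.1)
  rw [← condEnt_comp_injective _ _ _ (hG Sum.inl Sum.inl_injective),
    ← condEnt_comp_injective _ _ _ (hG Sum.inr Sum.inr_injective)] at key
  convert key using 3
  all_goals
    refine Prod.ext rfl (e.eq_symm_apply.2 ?_)
    ext i
    · simp [e, hybridObs, hj]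
    · simp [S, e, hybridObs, i.2]

lemma condEnt_hybridObs_le (s : Finset ι) :
    condEnt (jointPmf pX W V) (fun ω => f fun i => (ω i).1)
        (fun ω => (g fun i => (ω i).1, hybridObs s ω)) ≤
      condEnt (jointPmf pX W V) (fun ω => f fun i => (ω i).1)
        (fun ω => (g fun i => (ω i).1, hybridObs ∅ ω)) := by
  induction s using Finset.induction_on with
  | empty => exact le_rfl
  | insert j s hj ih =>
    exact (condEnt_hybridObs_insert_le hLN hpX hW0 hV0 hW1 hV1 f g hj).trans ih

theorem condEnt_outputs_le_of_lessNoisy :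
    condEnt (jointPmf pX W V) (fun ω => f fun i => (ω i).1)
        (fun ω => (g fun i => (ω i).1, fun i => (ω i).2.1)) ≤
      condEnt (jointPmf pX W V) (fun ω => f fun i => (ω i).1)
        (fun ω => (g fun i => (ω i).1, fun i => (ω i).2.2)) := by
  have hY := condEnt_comp_injective (jointPmf pX W V) (fun ω => f fun i => (ω i).1)
    (fun ω => (g fun i => (ω i).1, fun i => (ω i).2.1))
    (Function.injective_id.prodMap (Sum.inl_injective (β := 𝒵)).comp_left)
  have hZ := condEnt_comp_injective (jointPmf pX W V) (fun ω => f fun i => (ω i).1)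
    (fun ω => (g fun i => (ω i).1, fun i => (ω i).2.2))
    (Function.injective_id.prodMap (Sum.inr_injective (α := 𝒴)).comp_left)
  rw [← hY, ← hZ]
  convert condEnt_hybridObs_le hLN hpX hW0 hV0 hW1 hV1 f g Finset.univ using 3 <;>
    exact Prod.ext rfl (funext fun i => by simp [hybridObs])

end Hybrid

/-- Let `W : X → Y` and `V : X → Z` be discrete memoryless channels with
common (binary) input alphabet such that `W` is less noisy than `V`: for every finitely
supported `T` jointly distributed with the input `X` (joint pmf `r`), with outputs
generated through the channels (so `T → X → (Y, Z)` is a Markov chain),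
`I(T;Y) ≥ I(T;Z)`.  For i.i.d. inputs `X_1^N` (`N = 2^k`) with per-letter distribution
`pX`, independent channel uses, and `U_1^N = X_1^N · G_k` over GF(2), for every
`ε ∈ (0,1)` one has `𝒟_ε^N(X|Z) ⊆ 𝒟_ε^N(X|Y)` where
`𝒟_ε^N(X|Y) = {i : H(U_i | U_1^{i-1}, Y_1^N) ≤ ε}` and similarly for `Z`.
A point `ω` of the sample space assigns to coordinate `i` the triple
`ω i = (x_i, y_i, z_i)`. -/
theorem statement4 {𝒴 𝒵 : Type} [Fintype 𝒴] [DecidableEq 𝒴] [Fintype 𝒵] [DecidableEq 𝒵]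
    (W : ZMod 2 → 𝒴 → ℝ) (hW0 : ∀ x y, 0 ≤ W x y) (hW1 : ∀ x, ∑ y, W x y = 1)
    (V : ZMod 2 → 𝒵 → ℝ) (hV0 : ∀ x z, 0 ≤ V x z) (hV1 : ∀ x, ∑ z, V x z = 1)
    (hLN : ∀ (ζ : Type) [Fintype ζ] [DecidableEq ζ] (r : ζ × ZMod 2 → ℝ), IsPMF r →
      mutInfo
          (fun w : ζ × ZMod 2 × 𝒴 × 𝒵 => r (w.1, w.2.1) * W w.2.1 w.2.2.1 * V w.2.1 w.2.2.2)
          (fun w => w.1) (fun w => w.2.2.1) ≥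
        mutInfo
          (fun w : ζ × ZMod 2 × 𝒴 × 𝒵 => r (w.1, w.2.1) * W w.2.1 w.2.2.1 * V w.2.1 w.2.2.2)
          (fun w => w.1) (fun w => w.2.2.2))
    (pX : ZMod 2 → ℝ) (hpX : IsPMF pX)
    (k : ℕ)
    (p : (Fin (2 ^ k) → ZMod 2 × 𝒴 × 𝒵) → ℝ)
    (hp : p = fun ω => ∏ i, pX (ω i).1 * W (ω i).1 (ω i).2.1 * V (ω i).1 (ω i).2.2)
    (U : (Fin (2 ^ k) → ZMod 2 × 𝒴 × 𝒵) → Fin (2 ^ k) → ZMod 2)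
    (hU : U = fun ω => Matrix.vecMul (fun j => (ω j).1) (Gmat k)) :
    ∀ ε : ℝ, 0 < ε → ε < 1 →
      {i : Fin (2 ^ k) |
          condEnt p (fun ω => U ω i)
            (fun ω => ((fun j : Fin (i : ℕ) => U ω (Fin.castLE i.isLt.le j)),
              fun j => (ω j).2.2)) ≤ ε} ⊆
      {i : Fin (2 ^ k) |
          condEnt p (fun ω => U ω i)
            (fun ω => ((fun j : Fin (i : ℕ) => U ω (Fin.castLE i.isLt.le j)),
              fun j => (ω j).2.1)) ≤ ε} := by
  intro ε _ _ i hi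
  subst hp hU
  exact (condEnt_outputs_le_of_lessNoisy hLN hpX.1 hW0 hV0 hW1 hV1 (fun x => vecMul x (Gmat k) i)
    fun x (j : Fin i) => vecMul x (Gmat k) (Fin.castLE i.isLt.le j)).trans hi

end JWOM
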